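/- There exists an integer N₀ ≥ 2 such that for every integer N ≥ N₀ and every δv > 0, the matrix X is strictly diagonally dominant, i.e. q_i > |p_i| + |r_i| for all i = 1,…,N−1; in particular X is invertible. -/

import Mathlib

/-- The `n×n` real tridiagonal matrix with 1-indexed subdiagonal entries
`sub_{i+1}` (at position `(i+1, i)`), diagonal entries `dia_i` and superdiagonal
entries `sup_i` (at position `(i, i+1)`). -/
def triMatR (n : ℕ) (sub dia sup : ℕ → ℝ) : Matrix (Fin n) (Fin n) ℝ :=
  Matrix.of fun i j =>
    if i.val = j.val then dia (i.val + 1)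
    else if i.val + 1 = j.val then sup (i.val + 1)
    else if j.val + 1 = i.val then sub (i.val + 1)
    else 0

/-- The operator norm of a real square matrix induced by the Euclidean vector norm,
i.e. its largest singular value. -/
noncomputable def opNorm2 {n : ℕ} (M : Matrix (Fin n) (Fin n) ℝ) : ℝ :=
  ‖LinearMap.toContinuousLinearMap (Matrix.toEuclideanLin M)‖

/-- The space step `δz = (z_r - z_l)/N`. -/
noncomputable def dz (zl zr : ℝ) (N : ℕ) : ℝ := (zr - zl) / N

/-- The grid point `z_i = z_l + i δz`. -/
noncomputable def gridz (zl zr : ℝ) (N i : ℕ) : ℝ := zl + i * dz zl zr N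

/-- First-order central difference `Δ_z f_i = (f_{i+1} - f_{i-1})/(2 δz)`. -/
noncomputable def Dz (f : ℝ → ℝ) (zl zr : ℝ) (N i : ℕ) : ℝ :=
  (f (gridz zl zr N (i + 1)) - f (gridz zl zr N (i - 1))) / (2 * dz zl zr N)

/-- Second-order central difference `Δ_zz f_i = (f_{i+1} - 2 f_i + f_{i-1})/δz²`. -/
noncomputable def Dzz (f : ℝ → ℝ) (zl zr : ℝ) (N i : ℕ) : ℝ :=
  (f (gridz zl zr N (i + 1)) - 2 * f (gridz zl zr N i) + f (gridz zl zr N (i - 1))) /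
    dz zl zr N ^ 2

/-- `γ_i = a_i/b_i + (2/b_i) Δ_z b_i`. -/
noncomputable def γc (a b : ℝ → ℝ) (zl zr : ℝ) (N i : ℕ) : ℝ :=
  a (gridz zl zr N i) / b (gridz zl zr N i) +
    (2 / b (gridz zl zr N i)) * Dz b zl zr N i

/-- `ζ_i = a_i - (δz²/12)((a_i/b_i) Δ_z a_i + (2/b_i) Δ_z a_i Δ_z b_i - Δ_zz a_i)`. -/
noncomputable def ζc (a b : ℝ → ℝ) (zl zr : ℝ) (N i : ℕ) : ℝ :=
  a (gridz zl zr N i) - (dz zl zr N ^ 2 / 12) *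
    ((a (gridz zl zr N i) / b (gridz zl zr N i)) * Dz a zl zr N i +
      (2 / b (gridz zl zr N i)) * Dz a zl zr N i * Dz b zl zr N i -
      Dzz a zl zr N i)

/-- `α_i = b_i + (δz²/12)((a_i/b_i) Δ_z b_i - 2Δ_z a_i + Δ_zz b_i - (2/b_i)(Δ_z b_i)² + a_i²/b_i)`. -/
noncomputable def αc (a b : ℝ → ℝ) (zl zr : ℝ) (N i : ℕ) : ℝ :=
  b (gridz zl zr N i) + (dz zl zr N ^ 2 / 12) *
    ((a (gridz zl zr N i) / b (gridz zl zr N i)) * Dz b zl zr N i -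
      2 * Dz a zl zr N i + Dzz b zl zr N i -
      (2 / b (gridz zl zr N i)) * Dz b zl zr N i ^ 2 +
      a (gridz zl zr N i) ^ 2 / b (gridz zl zr N i))

/-- `p_i = (2 + δz γ_i)/(24 δv)`. -/
noncomputable def pc (a b : ℝ → ℝ) (zl zr : ℝ) (N : ℕ) (δv : ℝ) (i : ℕ) : ℝ :=
  (2 + dz zl zr N * γc a b zl zr N i) / (24 * δv)

/-- `q_i = 5/(6 δv)`. -/
noncomputable def qc (δv : ℝ) (i : ℕ) : ℝ := 5 / (6 * δv)

/-- `r_i = (2 - δz γ_i)/(24 δv)`. -/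
noncomputable def rc (a b : ℝ → ℝ) (zl zr : ℝ) (N : ℕ) (δv : ℝ) (i : ℕ) : ℝ :=
  (2 - dz zl zr N * γc a b zl zr N i) / (24 * δv)

/-- `l_i = -ζ_i/(2 δz) - α_i/δz²`. -/
noncomputable def lc (a b : ℝ → ℝ) (zl zr : ℝ) (N i : ℕ) : ℝ :=
  -ζc a b zl zr N i / (2 * dz zl zr N) - αc a b zl zr N i / dz zl zr N ^ 2

/-- `m_i = 2 α_i/δz²`. -/
noncomputable def mc (a b : ℝ → ℝ) (zl zr : ℝ) (N i : ℕ) : ℝ :=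
  2 * αc a b zl zr N i / dz zl zr N ^ 2

/-- `n_i = ζ_i/(2 δz) - α_i/δz²`. -/
noncomputable def nc (a b : ℝ → ℝ) (zl zr : ℝ) (N i : ℕ) : ℝ :=
  ζc a b zl zr N i / (2 * dz zl zr N) - αc a b zl zr N i / dz zl zr N ^ 2

/-- The `(N-1)×(N-1)` tridiagonal matrix `X` with `X_{i,i} = q_i`, `X_{i,i+1} = r_i`,
`X_{i+1,i} = p_{i+1}`. -/
noncomputable def Xmat (a b : ℝ → ℝ) (zl zr : ℝ) (N : ℕ) (δv : ℝ) :
    Matrix (Fin (N - 1)) (Fin (N - 1)) ℝ :=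
  triMatR (N - 1) (pc a b zl zr N δv) (qc δv) (rc a b zl zr N δv)

/-- The `(N-1)×(N-1)` tridiagonal matrix `Y` with `Y_{i,i} = m_i`, `Y_{i,i+1} = n_i`,
`Y_{i+1,i} = l_{i+1}`. -/
noncomputable def Ymat (a b : ℝ → ℝ) (zl zr : ℝ) (N : ℕ) (δv : ℝ) :
    Matrix (Fin (N - 1)) (Fin (N - 1)) ℝ :=
  triMatR (N - 1) (lc a b zl zr N) (mc a b zl zr N) (nc a b zl zr N)

/-! If `|δz γ_i| ≤ 2` then `p_i, r_i ≥ 0` and `p_i + r_i = 1/(6δv) < 5/(6δv) = q_i`.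
Moreover `δz γ_i = (δz a_i + (b_{i+1} - b_{i-1}))/b_i`, and once `δz` is small both terms of the
numerator are at most `ε ≤ b_i`: the first because `a` is bounded on `[z_l, z_r]`, the second by
uniform continuity of `b` there. Invertibility of `X` is then the Levy–Desplanques theorem. -/

open Filter Topology Set

lemma Finset.sum_ite_le_of_unique {ι : Type*} (s : Finset ι) (P : ι → Prop) [DecidablePred P]
    {c : ℝ} (hc : 0 ≤ c) (hP : ∀ x ∈ s, ∀ y ∈ s, P x → P y → x = y) :
    ∑ x ∈ s, (if P x then c else 0) ≤ c := by
  rw [← Finset.sum_filter, Finset.sum_const, nsmul_eq_mul]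
  have hcard : (s.filter P).card ≤ 1 := Finset.card_le_one.2 fun x hx y hy =>
    hP x (Finset.mem_filter.1 hx).1 y (Finset.mem_filter.1 hy).1
      (Finset.mem_filter.1 hx).2 (Finset.mem_filter.1 hy).2
  nlinarith [show ((s.filter P).card : ℝ) ≤ 1 by exact_mod_cast hcard]

lemma triMatR_det_ne_zero {n : ℕ} {sub dia sup : ℕ → ℝ}
    (h : ∀ k < n, |sub (k + 1)| + |sup (k + 1)| < |dia (k + 1)|) :
    (triMatR n sub dia sup).det ≠ 0 := by
  refine det_ne_zero_of_sum_row_lt_diag fun k => ?_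
  have hrow : ∀ j ∈ Finset.univ.erase k, ‖triMatR n sub dia sup k j‖ ≤
      (if j.val = k.val + 1 then |sup (k.val + 1)| else 0) +
        (if j.val + 1 = k.val then |sub (k.val + 1)| else 0) := by
    intro j hj
    have hkj : k.val ≠ j.val := fun h => Finset.ne_of_mem_erase hj (Fin.ext h.symm)
    simp only [triMatR, Matrix.of_apply, if_neg hkj, Real.norm_eq_abs]
    split_ifs <;> first | omega | simp
  calc ∑ j ∈ Finset.univ.erase k, ‖triMatR n sub dia sup k j‖
      ≤ ∑ j ∈ Finset.univ.erase k,
          ((if j.val = k.val + 1 then |sup (k.val + 1)| else 0) +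
            (if j.val + 1 = k.val then |sub (k.val + 1)| else 0)) := Finset.sum_le_sum hrow
    _ ≤ |sup (k.val + 1)| + |sub (k.val + 1)| := by
        rw [Finset.sum_add_distrib]
        gcongr
        · exact Finset.sum_ite_le_of_unique _ _ (abs_nonneg _)
            fun x _ y _ hx hy => Fin.ext (hx.trans hy.symm)
        · exact Finset.sum_ite_le_of_unique _ _ (abs_nonneg _)
            fun x _ y _ hx hy => Fin.ext (by omega)
    _ < ‖triMatR n sub dia sup k k‖ := by
        simpa [triMatR, add_comm] using h k.val k.isLt

lemma gridz_mem_Icc {zl zr : ℝ} (h : zl ≤ zr) {N j : ℕ} (hj : j ≤ N) :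
    gridz zl zr N j ∈ Icc zl zr := by
  rcases Nat.eq_zero_or_pos N with rfl | hN
  · simp [gridz, dz, h]
  have hdz : 0 ≤ dz zl zr N := div_nonneg (sub_nonneg.2 h) (Nat.cast_nonneg N)
  have hNdz : (N : ℝ) * dz zl zr N = zr - zl := by
    rw [dz]; field_simp
  have hjN : (j : ℝ) * dz zl zr N ≤ N * dz zl zr N := by gcongr
  constructor <;> simp only [gridz] <;> nlinarith [mul_nonneg (Nat.cast_nonneg j) hdz]

lemma gridz_succ_sub_pred (zl zr : ℝ) (N : ℕ) {i : ℕ} (hi : 1 ≤ i) :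
    gridz zl zr N (i + 1) - gridz zl zr N (i - 1) = 2 * dz zl zr N := by
  simp only [gridz, Nat.cast_sub hi]
  push_cast
  ring

lemma dz_mul_γc (a b : ℝ → ℝ) {zl zr : ℝ} {N : ℕ} (hdz : dz zl zr N ≠ 0) (i : ℕ) :
    dz zl zr N * γc a b zl zr N i =
      (dz zl zr N * a (gridz zl zr N i) +
        (b (gridz zl zr N (i + 1)) - b (gridz zl zr N (i - 1)))) / b (gridz zl zr N i) := by
  rw [γc, Dz]
  field_simp

lemma abs_dz_mul_γc_le_two (a b : ℝ → ℝ) {zl zr ε : ℝ} {N i : ℕ} (hdz : dz zl zr N ≠ 0)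
    (hbi : ε ≤ b (gridz zl zr N i)) (hε : 0 < ε)
    (ha : |dz zl zr N * a (gridz zl zr N i)| ≤ ε)
    (hb : |b (gridz zl zr N (i + 1)) - b (gridz zl zr N (i - 1))| ≤ ε) :
    |dz zl zr N * γc a b zl zr N i| ≤ 2 := by
  have hbpos : 0 < b (gridz zl zr N i) := hε.trans_le hbi
  rw [dz_mul_γc a b hdz, abs_div, abs_of_pos hbpos, div_le_iff₀ hbpos]
  linarith [abs_add_le (dz zl zr N * a (gridz zl zr N i))
    (b (gridz zl zr N (i + 1)) - b (gridz zl zr N (i - 1)))]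

lemma tendsto_dz_atTop (zl zr : ℝ) : Tendsto (dz zl zr) atTop (𝓝 0) :=
  tendsto_const_div_atTop_nhds_zero_nat (zr - zl)

lemma eventually_abs_dz_mul_γc_le_two {zl zr ε : ℝ} (hz : zl < zr) (hε : 0 < ε) {a b : ℝ → ℝ}
    (ha : ContinuousOn a (Icc zl zr)) (hb : ContinuousOn b (Icc zl zr))
    (hbe : ∀ z ∈ Icc zl zr, ε ≤ b z) :
    ∀ᶠ N in atTop, ∀ i, 1 ≤ i → i ≤ N - 1 → |dz zl zr N * γc a b zl zr N i| ≤ 2 := by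
  obtain ⟨A, hA⟩ := isCompact_Icc.exists_bound_of_continuousOn ha
  obtain ⟨δ, hδ, hbδ⟩ :=
    Metric.uniformContinuousOn_iff.1 (isCompact_Icc.uniformContinuousOn_of_continuous hb) ε hε
  have hdzA : ∀ᶠ N in atTop, dz zl zr N * A < ε := by
    simpa using ((tendsto_dz_atTop zl zr).mul_const A).eventually (gt_mem_nhds (by simpa using hε))
  have hdzδ : ∀ᶠ N in atTop, 2 * dz zl zr N < δ := by
    simpa using ((tendsto_dz_atTop zl zr).const_mul 2).eventually (gt_mem_nhds (by simpa using hδ))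
  filter_upwards [eventually_gt_atTop 0, hdzA, hdzδ] with N hN hNA hNδ i hi1 hi2
  have hdz : 0 < dz zl zr N := div_pos (sub_pos.2 hz) (Nat.cast_pos.2 hN)
  have hmem : ∀ j ≤ N, gridz zl zr N j ∈ Icc zl zr := fun j hj => gridz_mem_Icc hz.le hj
  refine abs_dz_mul_γc_le_two a b hdz.ne' (hbe _ (hmem i (by omega))) hε ?_ ?_
  · rw [abs_mul, abs_of_pos hdz]
    nlinarith [(Real.norm_eq_abs _).symm.trans_le (hA _ (hmem i (by omega)))]
  · have hclose : dist (gridz zl zr N (i + 1)) (gridz zl zr N (i - 1)) < δ := by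
      rwa [Real.dist_eq, gridz_succ_sub_pred zl zr N hi1, abs_of_pos (by positivity)]
    exact (hbδ _ (hmem _ (by omega)) _ (hmem _ (by omega)) hclose).le

lemma abs_pc_add_abs_rc_lt_qc (a b : ℝ → ℝ) {zl zr δv : ℝ} {N i : ℕ} (hδv : 0 < δv)
    (h : |dz zl zr N * γc a b zl zr N i| ≤ 2) :
    |pc a b zl zr N δv i| + |rc a b zl zr N δv i| < qc δv i := by
  obtain ⟨hl, hr⟩ := abs_le.1 h
  rw [pc, rc, qc, abs_div, abs_div, abs_of_pos (by positivity : (0 : ℝ) < 24 * δv),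
    abs_of_nonneg (by linarith), abs_of_nonneg (by linarith), ← add_div,
    div_lt_div_iff₀ (by positivity) (by positivity)]
  nlinarith

/-- There is `N₀ ≥ 2` such that for all `N ≥ N₀` and `δv > 0`, the matrix `X` is
strictly diagonally dominant, i.e. `q_i > |p_i| + |r_i|` for `i = 1, …, N-1`;
in particular `X` is invertible. -/
theorem stmt15 (zl zr : ℝ) (hz : zl < zr) (ε : ℝ) (hε : 0 < ε) (a b : ℝ → ℝ)
    (ha : ContDiffOn ℝ 2 a (Set.Icc zl zr)) (hb : ContDiffOn ℝ 2 b (Set.Icc zl zr))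
    (hbe : ∀ z ∈ Set.Icc zl zr, ε ≤ b z) :
    ∃ N₀ : ℕ, 2 ≤ N₀ ∧ ∀ N, N₀ ≤ N → ∀ δv : ℝ, 0 < δv →
      (∀ i, 1 ≤ i → i ≤ N - 1 →
        |pc a b zl zr N δv i| + |rc a b zl zr N δv i| < qc δv i) ∧
      IsUnit (Xmat a b zl zr N δv).det := by
  obtain ⟨N₁, hN₁⟩ := eventually_atTop.1
    (eventually_abs_dz_mul_γc_le_two hz hε ha.continuousOn hb.continuousOn hbe)
  refine ⟨max 2 N₁, le_max_left _ _, fun N hN δv hδv => ?_⟩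
  have hdom : ∀ i, 1 ≤ i → i ≤ N - 1 →
      |pc a b zl zr N δv i| + |rc a b zl zr N δv i| < qc δv i := fun i hi1 hi2 =>
    abs_pc_add_abs_rc_lt_qc a b hδv (hN₁ N (le_of_max_le_right hN) i hi1 hi2)
  refine ⟨hdom, isUnit_iff_ne_zero.2 (triMatR_det_ne_zero fun k hk => ?_)⟩
  have hq : |qc δv (k + 1)| = qc δv (k + 1) := abs_of_pos (by rw [qc]; positivity)
  rw [hq]
  exact hdom (k + 1) (by omega) (by omega)
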